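/- arXiv:2406.16054 — 2 statements merged into one kernel-verified Lean document; each statement's English description precedes it below -/
import Mathlib

section
/- Loop-invariant iteration claim: for deterministic assertions φ, Boolean expression B and command C with ⊨{φ∧B}C{φ}, for every interpretation I, every deterministic state S with S ⊨^I φ, and every natural number k, the probabilistic state (⟦C⟧ ∘ ↓_B)^k(μ_S) satisfies φ under I (every state in its support satisfies φ). -/
open scoped ENNReal

/-! ## Deterministic and probabilistic states -/

abbrev DState (V : Type) := V → ℤ

abbrev PState (V : Type) := DState V → ℝ≥0∞

open Classical in
noncomputable def pointDist {V : Type} (S : DState V) : PState V :=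
  fun S' => if S' = S then 1 else 0

def IsSubDist {V : Type} (μ : PState V) : Prop := (∑' S : DState V, μ S) ≤ 1

/-! ## Arithmetic and Boolean expressions over program variables -/

inductive AExp (V : Type) where
  | const : ℤ → AExp V
  | pvar : V → AExp V
  | add : AExp V → AExp V → AExp V
  | sub : AExp V → AExp V → AExp V
  | mul : AExp V → AExp V → AExp V

def AExp.eval {V : Type} (S : DState V) : AExp V → ℤ
  | const n => n
  | pvar X => S X
  | add e1 e2 => e1.eval S + e2.eval S
  | sub e1 e2 => e1.eval S - e2.eval S
  | mul e1 e2 => e1.eval S * e2.eval S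

inductive BExp (V : Type) where
  | tt : BExp V
  | ff : BExp V
  | le : AExp V → AExp V → BExp V
  | lt : AExp V → AExp V → BExp V
  | eq : AExp V → AExp V → BExp V
  | not : BExp V → BExp V
  | and : BExp V → BExp V → BExp V

def BExp.holds {V : Type} (S : DState V) : BExp V → Prop
  | tt => True
  | ff => False
  | le e1 e2 => e1.eval S ≤ e2.eval S
  | lt e1 e2 => e1.eval S < e2.eval S
  | eq e1 e2 => e1.eval S = e2.eval S
  | not b => ¬ b.holds S
  | and b1 b2 => b1.holds S ∧ b2.holds S

open Classical in
/-- restriction `↓_B μ` of a probabilistic state to the states satisfying `B`. -/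
noncomputable def dRestrict {V : Type} (B : BExp V) (μ : PState V) : PState V :=
  fun S => if B.holds S then μ S else 0

/-! ## Commands -/

inductive Cmd (V : Type) where
  | skip : Cmd V
  | assign : V → AExp V → Cmd V
  /-- probabilistic assignment `X ←$ {a₁:k₁,…,aₙ:kₙ}`: a list of pairs of
  nonnegative-real weights and integer values, with the weights summing to 1. -/
  | passign : V → {l : List (NNReal × ℤ) // (l.map Prod.fst).sum = 1} → Cmd V
  | seq : Cmd V → Cmd V → Cmd V
  | ifte : BExp V → Cmd V → Cmd V → Cmd V
  | whileDo : BExp V → Cmd V → Cmd V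

open Classical in
/-- semantics of the assignment of a state-dependent integer to variable `X`. -/
noncomputable def detAssign {V : Type} (X : V) (f : DState V → ℤ) (μ : PState V) : PState V :=
  fun S' => ∑' S : DState V, μ S * pointDist (Function.update S X (f S)) S'

open Classical in
noncomputable def Cmd.sem {V : Type} : Cmd V → PState V → PState V
  | .skip, μ => μ
  | .assign X E, μ => detAssign X (fun S => E.eval S) μ
  | .passign X Rl, μ =>
      fun S' => (Rl.1.map (fun p => (p.1 : ℝ≥0∞) * detAssign X (fun _ => p.2) μ S')).sum
  | .seq C1 C2, μ => C2.sem (C1.sem μ)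
  | .ifte B C1 C2, μ =>
      fun S' => C1.sem (dRestrict B μ) S' + C2.sem (dRestrict (BExp.not B) μ) S'
  | .whileDo B C, μ =>
      fun S' => ∑' i : ℕ, dRestrict (BExp.not B) ((fun ν => C.sem (dRestrict B ν))^[i] μ) S'
termination_by C _ => sizeOf C

/-- `C.pow k` is the `k`-fold sequential composition of `C` (with `C⁰ = skip`). -/
def Cmd.pow {V : Type} (C : Cmd V) : ℕ → Cmd V
  | 0 => .skip
  | k + 1 => .seq C (C.pow k)

/-! ## Deterministic assertions -/

inductive AExpL (V L : Type) where
  | const : ℤ → AExpL V L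
  | pvar : V → AExpL V L
  | lvar : L → AExpL V L
  | add : AExpL V L → AExpL V L → AExpL V L
  | sub : AExpL V L → AExpL V L → AExpL V L
  | mul : AExpL V L → AExpL V L → AExpL V L

def AExpL.eval {V L : Type} (I : L → ℤ) (S : DState V) : AExpL V L → ℤ
  | const n => n
  | pvar X => S X
  | lvar x => I x
  | add e1 e2 => e1.eval I S + e2.eval I S
  | sub e1 e2 => e1.eval I S - e2.eval I S
  | mul e1 e2 => e1.eval I S * e2.eval I S

def AExp.toL {V L : Type} : AExp V → AExpL V L
  | .const n => .const n
  | .pvar X => .pvar X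
  | .add e1 e2 => .add e1.toL e2.toL
  | .sub e1 e2 => .sub e1.toL e2.toL
  | .mul e1 e2 => .mul e1.toL e2.toL

/-- Deterministic assertions: first-order formulas over program and logical
variables (including, for the weakest preconditions of loops, countable
conjunctions `conj`). -/
inductive Assertion (V L : Type) where
  | tt : Assertion V L
  | ff : Assertion V L
  | le : AExpL V L → AExpL V L → Assertion V L
  | lt : AExpL V L → AExpL V L → Assertion V L
  | eq : AExpL V L → AExpL V L → Assertion V L
  | not : Assertion V L → Assertion V L
  | and : Assertion V L → Assertion V L → Assertion V L
  | all : L → Assertion V L → Assertion V L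
  | conj : (ℕ → Assertion V L) → Assertion V L

def Assertion.or {V L : Type} (φ ψ : Assertion V L) : Assertion V L :=
  (φ.not.and ψ.not).not

open Classical in
/-- satisfaction `S ⊨^I φ` of a deterministic assertion on a deterministic state. -/
def Assertion.sat {V L : Type} : Assertion V L → (L → ℤ) → DState V → Prop
  | tt, _, _ => True
  | ff, _, _ => False
  | le e1 e2, I, S => e1.eval I S ≤ e2.eval I S
  | lt e1 e2, I, S => e1.eval I S < e2.eval I S
  | eq e1 e2, I, S => e1.eval I S = e2.eval I S
  | not φ, I, S => ¬ φ.sat I S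
  | and φ ψ, I, S => φ.sat I S ∧ ψ.sat I S
  | all x φ, I, S => ∀ n : ℤ, φ.sat (Function.update I x n) S
  | conj f, I, S => ∀ k : ℕ, (f k).sat I S

open Classical in
noncomputable def AExpL.substP {V L : Type} (X : V) (E : AExp V) : AExpL V L → AExpL V L
  | const n => const n
  | pvar Y => if Y = X then E.toL else pvar Y
  | lvar x => lvar x
  | add e1 e2 => add (e1.substP X E) (e2.substP X E)
  | sub e1 e2 => sub (e1.substP X E) (e2.substP X E)
  | mul e1 e2 => mul (e1.substP X E) (e2.substP X E)

/-- substitution `φ[X/E]` of the arithmetic expression `E` for the program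
variable `X`. -/
noncomputable def Assertion.substP {V L : Type} (X : V) (E : AExp V) :
    Assertion V L → Assertion V L
  | tt => tt
  | ff => ff
  | le e1 e2 => le (e1.substP X E) (e2.substP X E)
  | lt e1 e2 => lt (e1.substP X E) (e2.substP X E)
  | eq e1 e2 => eq (e1.substP X E) (e2.substP X E)
  | not φ => not (φ.substP X E)
  | and φ ψ => and (φ.substP X E) (ψ.substP X E)
  | all x φ => all x (φ.substP X E)
  | conj f => conj (fun k => (f k).substP X E)

/-- the precondition `φ[X/k₁] ∧ … ∧ φ[X/kₙ]` of a probabilistic assignment. -/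
noncomputable def pasPre {V L : Type} (φ : Assertion V L) (X : V)
    (l : List (NNReal × ℤ)) : Assertion V L :=
  l.foldr (fun p acc => Assertion.and (φ.substP X (AExp.const p.2)) acc) Assertion.tt

def BExp.toAssertion {V L : Type} : BExp V → Assertion V L
  | tt => .tt
  | ff => .ff
  | le e1 e2 => .le e1.toL e2.toL
  | lt e1 e2 => .lt e1.toL e2.toL
  | eq e1 e2 => .eq e1.toL e2.toL
  | not b => .not b.toAssertion
  | and b1 b2 => .and b1.toAssertion b2.toAssertion

/-- `μ ⊨^I φ`: every support of the probabilistic state `μ` satisfies `φ`. -/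
def PSat {V L : Type} (μ : PState V) (I : L → ℤ) (φ : Assertion V L) : Prop :=
  ∀ S : DState V, μ S ≠ 0 → φ.sat I S

/-- validity `⊨ {φ} C {ψ}` of a Hoare triple with deterministic assertions. -/
def ValidD {V L : Type} (φ : Assertion V L) (C : Cmd V) (ψ : Assertion V L) : Prop :=
  ∀ (I : L → ℤ) (S : DState V), φ.sat I S → PSat (C.sem (pointDist S)) I ψ

/-! ## The proof system PHL_d -/

inductive Derivable {V L : Type} : Assertion V L → Cmd V → Assertion V L → Prop where
  | skip (φ : Assertion V L) : Derivable φ .skip φ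
  | assign (φ : Assertion V L) (X : V) (E : AExp V) :
      Derivable (φ.substP X E) (.assign X E) φ
  | passign (φ : Assertion V L) (X : V)
      (Rl : {l : List (NNReal × ℤ) // (l.map Prod.fst).sum = 1}) :
      Derivable (pasPre φ X Rl.1) (.passign X Rl) φ
  | seq {φ φ1 φ2 : Assertion V L} {C1 C2 : Cmd V} :
      Derivable φ C1 φ1 → Derivable φ1 C2 φ2 → Derivable φ (.seq C1 C2) φ2
  | ifte {φ ψ : Assertion V L} {B : BExp V} {C1 C2 : Cmd V} :
      Derivable (φ.and B.toAssertion) C1 ψ →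
      Derivable (φ.and B.toAssertion.not) C2 ψ →
      Derivable φ (.ifte B C1 C2) ψ
  | cons {φ' φ ψ ψ' : Assertion V L} {C : Cmd V} :
      (∀ (I : L → ℤ) (S : DState V), φ'.sat I S → φ.sat I S) →
      Derivable φ C ψ →
      (∀ (I : L → ℤ) (S : DState V), ψ.sat I S → ψ'.sat I S) →
      Derivable φ' C ψ'
  | and {φ1 φ2 ψ1 ψ2 : Assertion V L} {C : Cmd V} :
      Derivable φ1 C ψ1 → Derivable φ2 C ψ2 →
      Derivable (φ1.and φ2) C (ψ1.and ψ2)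
  | or {φ1 φ2 ψ1 ψ2 : Assertion V L} {C : Cmd V} :
      Derivable φ1 C ψ1 → Derivable φ2 C ψ2 →
      Derivable (φ1.or φ2) C (ψ1.or ψ2)
  | whileDo {φ : Assertion V L} {B : BExp V} {C : Cmd V} :
      Derivable (φ.and B.toAssertion) C φ →
      Derivable φ (.whileDo B C) (φ.and B.toAssertion.not)

/-! ## Weakest preconditions for deterministic assertions -/

noncomputable def wp {V L : Type} : Cmd V → Assertion V L → Assertion V L
  | .skip, φ => φ
  | .assign X E, φ => φ.substP X E
  | .passign X Rl, φ => pasPre φ X Rl.1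
  | .seq C1 C2, φ => wp C1 (wp C2 φ)
  | .ifte B C1 C2, φ =>
      (B.toAssertion.and (wp C1 φ)).or (B.toAssertion.not.and (wp C2 φ))
  | .whileDo B C, φ => .conj (fun k =>
      Nat.rec (motive := fun _ => Assertion V L) Assertion.tt
        (fun _ ψk => (B.toAssertion.and (wp C ψk)).or (B.toAssertion.not.and φ)) k)
termination_by C _ => sizeOf C

/-! ## Real expressions and weakest preterms -/

/-- Real expressions (terms): real constants, real variables, probabilities of
deterministic assertions, arithmetic combinations, and (semantically
interpreted) countable sums. -/
inductive RExp (V L R : Type) where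
  | const : ℝ → RExp V L R
  | rvar : R → RExp V L R
  | prob : Assertion V L → RExp V L R
  | add : RExp V L R → RExp V L R → RExp V L R
  | sub : RExp V L R → RExp V L R → RExp V L R
  | mul : RExp V L R → RExp V L R → RExp V L R
  | infsum : (ℕ → RExp V L R) → RExp V L R

noncomputable def RExp.eval {V L R : Type} (IL : L → ℤ) (IR : R → ℝ) (μ : PState V) :
    RExp V L R → ℝ
  | const a => a
  | rvar x => IR x
  | prob φ => (∑' S : {S : DState V // φ.sat IL S}, μ S.1).toReal
  | add r1 r2 => r1.eval IL IR μ + r2.eval IL IR μ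
  | sub r1 r2 => r1.eval IL IR μ - r2.eval IL IR μ
  | mul r1 r2 => r1.eval IL IR μ * r2.eval IL IR μ
  | infsum f => ∑' k : ℕ, (f k).eval IL IR μ

/-- the conditional term `r/B`. -/
def RExp.cond {V L R : Type} (B : Assertion V L) : RExp V L R → RExp V L R
  | const a => const a
  | rvar x => rvar x
  | prob φ => prob (φ.and B)
  | add r1 r2 => add (r1.cond B) (r2.cond B)
  | sub r1 r2 => sub (r1.cond B) (r2.cond B)
  | mul r1 r2 => mul (r1.cond B) (r2.cond B)
  | infsum f => infsum (fun k => (f k).cond B)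

open Classical in
/-- restriction `↓_B μ` of a probabilistic state to the states satisfying the
deterministic assertion `B` (under the interpretation `I`). -/
noncomputable def aRestrict {V L : Type} (I : L → ℤ) (B : Assertion V L) (μ : PState V) :
    PState V :=
  fun S => if B.sat I S then μ S else 0

/-- homomorphic extension of an action on probability atoms to all real
expressions. -/
def homExt {V L R : Type} (h : Assertion V L → RExp V L R) : RExp V L R → RExp V L R
  | .const a => .const a
  | .rvar x => .rvar x
  | .prob φ => h φ
  | .add r1 r2 => .add (homExt h r1) (homExt h r2)
  | .sub r1 r2 => .sub (homExt h r1) (homExt h r2)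
  | .mul r1 r2 => .mul (homExt h r1) (homExt h r2)
  | .infsum f => .infsum (fun k => homExt h (f k))

/-- the finite conjunction `f 0 ∧ … ∧ f (n-1)`. -/
def finConj {V L : Type} : ℕ → (ℕ → Assertion V L) → Assertion V L
  | 0, _ => .tt
  | k + 1, f => (finConj k f).and (f k)

/-- the assertion `wp(i) = ¬wp(C⁰,¬B) ∧ … ∧ ¬wp(C^{i-1},¬B) ∧ wp(Cⁱ,¬B)`. -/
noncomputable def wpN {V L : Type} (B : BExp V) (C : Cmd V) (i : ℕ) : Assertion V L :=
  (finConj i (fun j => (wp (C.pow j) B.toAssertion.not).not)).and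
    (wp (C.pow i) B.toAssertion.not)

/-- the assertion `wp(∞) = ⋀_{i≥0} ¬wp(Cⁱ,¬B)`. -/
noncomputable def wpInf {V L : Type} (B : BExp V) (C : Cmd V) : Assertion V L :=
  .conj (fun i => (wp (C.pow i) B.toAssertion.not).not)

open Classical in
/-- the weakest preterm of a probability atom `P(φ)` for the probabilistic
assignment `X ←$ l`: the sum over nonempty subsets `T` of the indices of
`(Σ_{i∈T} aᵢ) · P(⋀_{i∈T} φ[X/kᵢ] ∧ ⋀_{j∉T} ¬φ[X/kⱼ])`. -/
noncomputable def ptPAS {V L R : Type} (X : V) (l : List (NNReal × ℤ))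
    (φ : Assertion V L) : RExp V L R :=
  (((Finset.univ : Finset (Finset (Fin l.length))).filter Finset.Nonempty).toList).foldr
    (fun T acc => RExp.add
      (RExp.mul (RExp.const (∑ i ∈ T, ((l.get i).1 : ℝ)))
        (RExp.prob (finConj l.length (fun j =>
          if h : j < l.length then
            (if (⟨j, h⟩ : Fin l.length) ∈ T then
              φ.substP X (AExp.const (l.get ⟨j, h⟩).2)
            else
              (φ.substP X (AExp.const (l.get ⟨j, h⟩).2)).not)
          else Assertion.tt))))
      acc)
    (RExp.const 0)

open Classical in
/-- the weakest preterm of a probability atom `P(φ)` with respect to a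
command. -/
noncomputable def ptProb {V L R : Type} : Cmd V → Assertion V L → RExp V L R
  | .skip, φ => .prob φ
  | .assign X E, φ => .prob (φ.substP X E)
  | .passign X Rl, φ => ptPAS X Rl.1 φ
  | .seq C1 C2, φ => homExt (fun ψ => ptProb C1 ψ) (ptProb C2 φ)
  | .ifte B C1 C2, φ =>
      .add ((ptProb C1 φ).cond B.toAssertion) ((ptProb C2 φ).cond B.toAssertion.not)
  | .whileDo B C, φ =>
      -- `g` is the preterm transformer of `IF = if B then C else skip`
      let g : RExp V L R → RExp V L R := fun r =>
        .add ((homExt (fun ψ => ptProb C ψ) r).cond B.toAssertion)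
          (r.cond B.toAssertion.not)
      -- `SUM = Σ_{i=0}^∞ P(wp(i)) · (pt(IFⁱ, P(φ)) / wp(i))`
      let SUM : RExp V L R := .infsum (fun i =>
        .mul (.prob (wpN B C i)) ((g^[i] (.prob φ)).cond (wpN B C i)))
      -- `f r = pt(C, r) / wp(∞)`
      let f : RExp V L R → RExp V L R := fun r =>
        (homExt (fun ψ => ptProb C ψ) r).cond (wpInf B C)
      -- `Σ_{i=0}^∞ Tᵢ` with `Tᵢ = fⁱ(SUM) · ∏_{j<i} fʲ(P(wp(∞)))`
      .infsum (fun i =>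
        .mul (f^[i] SUM)
          ((List.range i).foldr
            (fun j acc => .mul (f^[j] (.prob (wpInf B C))) acc) (.const 1)))
termination_by C _ => sizeOf C

/-- the weakest preterm `pt(C, r)`. -/
noncomputable def pt {V L R : Type} (C : Cmd V) : RExp V L R → RExp V L R :=
  homExt (fun φ => ptProb C φ)

/-! ## Probabilistic formulas -/

inductive PFormula (V L R : Type) where
  | le : RExp V L R → RExp V L R → PFormula V L R
  | lt : RExp V L R → RExp V L R → PFormula V L R
  | eq : RExp V L R → RExp V L R → PFormula V L R
  | not : PFormula V L R → PFormula V L R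
  | and : PFormula V L R → PFormula V L R → PFormula V L R

noncomputable def PFormula.sat {V L R : Type} (IL : L → ℤ) (IR : R → ℝ) (μ : PState V) :
    PFormula V L R → Prop
  | le r1 r2 => r1.eval IL IR μ ≤ r2.eval IL IR μ
  | lt r1 r2 => r1.eval IL IR μ < r2.eval IL IR μ
  | eq r1 r2 => r1.eval IL IR μ = r2.eval IL IR μ
  | not Φ => ¬ Φ.sat IL IR μ
  | and Φ Ψ => Φ.sat IL IR μ ∧ Ψ.sat IL IR μ

/-- the weakest precondition of a probabilistic assertion. -/
noncomputable def WP {V L R : Type} (C : Cmd V) : PFormula V L R → PFormula V L R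
  | .le r1 r2 => .le (pt C r1) (pt C r2)
  | .lt r1 r2 => .lt (pt C r1) (pt C r2)
  | .eq r1 r2 => .eq (pt C r1) (pt C r2)
  | .not Φ => .not (WP C Φ)
  | .and Φ Ψ => .and (WP C Φ) (WP C Ψ)

/-- validity `⊨ {Φ} C {Ψ}` of a Hoare triple with probabilistic assertions. -/
def ValidP {V L R : Type} (Φ : PFormula V L R) (C : Cmd V) (Ψ : PFormula V L R) : Prop :=
  ∀ (IL : L → ℤ) (IR : R → ℝ) (μ : PState V), IsSubDist μ →
    Φ.sat IL IR μ → Ψ.sat IL IR (C.sem μ)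

/-! ## The proof system of PHL with probabilistic assertions -/

inductive PDerivable {V L R : Type} : PFormula V L R → Cmd V → PFormula V L R → Prop where
  | skip (Φ : PFormula V L R) : PDerivable Φ .skip Φ
  | assign (Φ : PFormula V L R) (X : V) (E : AExp V) :
      PDerivable (WP (.assign X E) Φ) (.assign X E) Φ
  | passign (Φ : PFormula V L R) (X : V)
      (Rl : {l : List (NNReal × ℤ) // (l.map Prod.fst).sum = 1}) :
      PDerivable (WP (.passign X Rl) Φ) (.passign X Rl) Φ
  | ifte (Φ : PFormula V L R) (B : BExp V) (C1 C2 : Cmd V) :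
      PDerivable (WP (.ifte B C1 C2) Φ) (.ifte B C1 C2) Φ
  | whileDo (Φ : PFormula V L R) (B : BExp V) (C : Cmd V) :
      PDerivable (WP (.whileDo B C) Φ) (.whileDo B C) Φ
  | seq {Φ Φ1 Φ2 : PFormula V L R} {C1 C2 : Cmd V} :
      PDerivable Φ C1 Φ1 → PDerivable Φ1 C2 Φ2 → PDerivable Φ (.seq C1 C2) Φ2
  | cons {Φ' Φ Ψ Ψ' : PFormula V L R} {C : Cmd V} :
      (∀ (IL : L → ℤ) (IR : R → ℝ) (μ : PState V), IsSubDist μ →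
        Φ'.sat IL IR μ → Φ.sat IL IR μ) →
      PDerivable Φ C Ψ →
      (∀ (IL : L → ℤ) (IR : R → ℝ) (μ : PState V), IsSubDist μ →
        Ψ.sat IL IR μ → Ψ'.sat IL IR μ) →
      PDerivable Φ' C Ψ'

/-! Every command denotes a linear map on sub-distributions, so `⟦C⟧μ` is the `μ`-weighted
sum of the `⟦C⟧μ_S`. Hence every state in the support of `⟦C⟧μ` lies in the support of some
`⟦C⟧μ_S` with `S ∈ sp(μ)`, and a valid deterministic triple, which only speaks about point
distributions, applies to arbitrary probabilistic states. The invariant `φ` is then carried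
through each application of `⟦C⟧ ∘ ↓_B`, since `↓_B` only keeps states satisfying `φ ∧ B`. -/

variable {V L : Type}

theorem AExp.toL_eval (I : L → ℤ) (S : DState V) (e : AExp V) :
    (e.toL : AExpL V L).eval I S = e.eval S := by
  induction e <;> simp [AExp.toL, AExp.eval, AExpL.eval, *]

theorem BExp.sat_toAssertion (I : L → ℤ) (S : DState V) (B : BExp V) :
    (B.toAssertion : Assertion V L).sat I S ↔ B.holds S := by
  induction B <;> simp [BExp.toAssertion, BExp.holds, Assertion.sat, AExp.toL_eval, *]

theorem tsum_mul_pointDist (μ : PState V) (S' : DState V) :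
    ∑' S, μ S * pointDist S S' = μ S' := by
  rw [tsum_eq_single S' fun S hS => by simp [pointDist, Ne.symm hS]]
  simp [pointDist]

open Classical in
theorem detAssign_pointDist (X : V) (f : DState V → ℤ) (S S' : DState V) :
    detAssign X f (pointDist S) S' = pointDist (Function.update S X (f S)) S' := by
  rw [detAssign, tsum_eq_single S fun T hT => by simp [pointDist, hT]]
  simp [pointDist]

def IsKernelMap (F : PState V → PState V) : Prop :=
  ∀ μ S', F μ S' = ∑' S, μ S * F (pointDist S) S'

namespace IsKernelMap

theorem id : IsKernelMap (id : PState V → PState V) := fun μ S' =>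
  (tsum_mul_pointDist μ S').symm

theorem comp {F G : PState V → PState V} (hG : IsKernelMap G) (hF : IsKernelMap F) :
    IsKernelMap (G ∘ F) := fun μ S' => by
  simp only [Function.comp_apply]
  calc G (F μ) S' = ∑' T, (∑' S, μ S * F (pointDist S) T) * G (pointDist T) S' := by
        rw [hG]; exact tsum_congr fun T => by rw [hF μ T]
    _ = ∑' S, μ S * ∑' T, F (pointDist S) T * G (pointDist T) S' := by
        simp only [← ENNReal.tsum_mul_right, ← ENNReal.tsum_mul_left, mul_assoc]
        exact ENNReal.tsum_comm
    _ = ∑' S, μ S * G (F (pointDist S)) S' := tsum_congr fun S => by rw [hG (F _)]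

theorem iterate {F : PState V → PState V} (hF : IsKernelMap F) (n : ℕ) :
    IsKernelMap F^[n] := by
  induction n with
  | zero => exact IsKernelMap.id
  | succ n ih => rw [Function.iterate_succ']; exact hF.comp ih

theorem add {F G : PState V → PState V} (hF : IsKernelMap F) (hG : IsKernelMap G) :
    IsKernelMap fun μ S' => F μ S' + G μ S' := fun μ S' => by
  beta_reduce
  rw [hF, hG, ← ENNReal.tsum_add]
  simp only [mul_add]

theorem const_mul {F : PState V → PState V} (c : ℝ≥0∞) (hF : IsKernelMap F) :
    IsKernelMap fun μ S' => c * F μ S' := fun μ S' => by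
  beta_reduce
  rw [hF, ← ENNReal.tsum_mul_left]
  simp only [mul_left_comm]

theorem list_sum {ι : Type*} {F : ι → PState V → PState V} (hF : ∀ i, IsKernelMap (F i))
    (l : List ι) : IsKernelMap fun μ S' => (l.map fun i => F i μ S').sum := by
  induction l with
  | nil => intro μ S'; simp
  | cons i l ih => simpa only [List.map_cons, List.sum_cons] using (hF i).add ih

theorem tsum {F : ℕ → PState V → PState V} (hF : ∀ i, IsKernelMap (F i)) :
    IsKernelMap fun μ S' => ∑' i, F i μ S' := fun μ S' => by
  simp only [← ENNReal.tsum_mul_left, hF _ μ]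
  exact ENNReal.tsum_comm

theorem dRestrict (B : BExp V) : IsKernelMap (dRestrict B) := fun μ S' => by
  unfold _root_.dRestrict
  split_ifs with hB
  · exact (tsum_mul_pointDist μ S').symm
  · simp

theorem detAssign (X : V) (f : DState V → ℤ) : IsKernelMap (detAssign X f) := fun μ S' => by
  simp only [detAssign_pointDist]
  rfl

theorem exists_ne_zero {F : PState V → PState V} (hF : IsKernelMap F) {μ : PState V}
    {S' : DState V} (h : F μ S' ≠ 0) : ∃ S, μ S ≠ 0 ∧ F (pointDist S) S' ≠ 0 := by
  rw [hF, Ne, ENNReal.tsum_eq_zero, not_forall] at h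
  obtain ⟨S, hS⟩ := h
  exact ⟨S, left_ne_zero_of_mul hS, right_ne_zero_of_mul hS⟩

end IsKernelMap

theorem Cmd.isKernelMap_sem (C : Cmd V) : IsKernelMap C.sem := by
  induction C <;> intro μ S'
  case skip => simp only [Cmd.sem]; exact IsKernelMap.id μ S'
  case assign X E => simp only [Cmd.sem]; exact IsKernelMap.detAssign X _ μ S'
  case passign X Rl =>
    simp only [Cmd.sem]
    exact IsKernelMap.list_sum (fun _ => (IsKernelMap.detAssign X _).const_mul _) Rl.1 μ S'
  case seq C₁ C₂ ih₁ ih₂ => simp only [Cmd.sem]; exact ih₂.comp ih₁ μ S'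
  case ifte B C₁ C₂ ih₁ ih₂ =>
    simp only [Cmd.sem]
    exact (ih₁.comp (IsKernelMap.dRestrict B)).add (ih₂.comp (IsKernelMap.dRestrict _)) μ S'
  case whileDo B C ih =>
    simp only [Cmd.sem]
    exact IsKernelMap.tsum
      (fun i => (IsKernelMap.dRestrict _).comp ((ih.comp (IsKernelMap.dRestrict B)).iterate i)) μ S'

theorem PSat.of_pointDist {I : L → ℤ} {φ : Assertion V L} {S : DState V} (hS : φ.sat I S) :
    PSat (pointDist S) I φ := by
  intro T hT
  by_cases h : T = S
  · exact h ▸ hS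
  · simp [pointDist, h] at hT

theorem PSat.dRestrict {μ : PState V} {I : L → ℤ} {φ : Assertion V L} (h : PSat μ I φ)
    (B : BExp V) : PSat (dRestrict B μ) I (φ.and B.toAssertion) := by
  intro S hS
  unfold _root_.dRestrict at hS
  split_ifs at hS with hB
  · exact ⟨h S hS, (B.sat_toAssertion I S).2 hB⟩
  · exact absurd rfl hS

theorem ValidD.psat_sem {φ ψ : Assertion V L} {C : Cmd V} (h : ValidD φ C ψ) {μ : PState V}
    {I : L → ℤ} (hμ : PSat μ I φ) : PSat (C.sem μ) I ψ := fun S' hS' => by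
  obtain ⟨S, hS, hSS'⟩ := C.isKernelMap_sem.exists_ne_zero hS'
  exact h I S (hμ S hS) S' hSS'

/-- Loop-invariant iteration claim: if `⊨ {φ ∧ B} C {φ}`, then
for every interpretation `I`, every deterministic state `S` satisfying `φ`, and
every `k : ℕ`, the probabilistic state `(⟦C⟧ ∘ ↓_B)^k (μ_S)` satisfies `φ`
(every state in its support satisfies `φ` under `I`). -/
theorem loop_invariant_iterate {V L : Type} (φ : Assertion V L) (B : BExp V) (C : Cmd V)
    (h : ValidD (φ.and B.toAssertion) C φ) :
    ∀ (I : L → ℤ) (S : DState V), φ.sat I S → ∀ k : ℕ,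
      PSat ((fun ν => C.sem (dRestrict B ν))^[k] (pointDist S)) I φ := by
  intro I S hS k
  induction k with
  | zero => exact PSat.of_pointDist hS
  | succ k ih =>
    rw [Function.iterate_succ_apply']
    exact h.psat_sem (ih.dRestrict B)
end

section
/- Derivability of weakest preconditions in PHL_d: for every command C and every deterministic assertion φ, the triple {wp(C,φ)} C {φ} is derivable in the proof system PHL_d, where wp is the weakest-precondition transformer defined structurally on commands. -/
open scoped ENNReal

/-! The only rule that needs thought is WHILE, with invariant `wp(while B do C, φ) = ⋀ₖ ψₖ`.
It is preserved by the body because `ψₖ₊₁ ∧ B` entails `wp(C, ψₖ)` and `wp(C, -)` commutes,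
semantically, with arbitrary conjunctions; on exit, `ψ₁ ∧ ¬B` entails `φ`. -/

section
open Classical

variable {V L : Type}

lemma AExp.eval_toL (E : AExp V) (I : L → ℤ) (S : DState V) :
    (E.toL : AExpL V L).eval I S = E.eval S := by
  induction E <;> simp [AExp.toL, AExpL.eval, AExp.eval, *]

lemma AExpL.eval_substP (X : V) (E : AExp V) (e : AExpL V L) (I : L → ℤ) (S : DState V) :
    (e.substP X E).eval I S = e.eval I (Function.update S X (E.eval S)) := by
  induction e with
  | pvar Y =>
    by_cases h : Y = X
    · subst h
      simp [AExpL.substP, AExpL.eval, AExp.eval_toL]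
    · simp [AExpL.substP, h, AExpL.eval]
  | _ => simp [AExpL.substP, AExpL.eval, *]

namespace Assertion

lemma sat_substP (X : V) (E : AExp V) (φ : Assertion V L) (I : L → ℤ) (S : DState V) :
    (φ.substP X E).sat I S ↔ φ.sat I (Function.update S X (E.eval S)) := by
  induction φ generalizing I with
  | _ => simp [substP, sat, AExpL.eval_substP, *]

lemma sat_or (φ ψ : Assertion V L) (I : L → ℤ) (S : DState V) :
    (φ.or ψ).sat I S ↔ φ.sat I S ∨ ψ.sat I S := by
  simp only [Assertion.or, sat]
  tauto

variable {b φ ψ : Assertion V L} {I : L → ℤ} {S : DState V}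

lemma sat_guard_pos (hb : b.sat I S) : ((b.and φ).or (b.not.and ψ)).sat I S ↔ φ.sat I S := by
  simp [sat_or, sat, hb]

lemma sat_guard_neg (hb : ¬ b.sat I S) :
    ((b.and φ).or (b.not.and ψ)).sat I S ↔ ψ.sat I S := by
  simp [sat_or, sat, hb]

end Assertion

lemma sat_pasPre (φ : Assertion V L) (X : V) (l : List (NNReal × ℤ)) (I : L → ℤ)
    (S : DState V) :
    (pasPre φ X l).sat I S ↔ ∀ p ∈ l, φ.sat I (Function.update S X p.2) := by
  induction l with
  | nil => simp [pasPre, Assertion.sat]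
  | cons p l ih =>
    simp only [pasPre] at ih ⊢
    simp [Assertion.sat, ih, Assertion.sat_substP, AExp.eval]

/-- The approximants `ψₖ` of the weakest precondition of `while B do C`. -/
noncomputable def loopApprox (B : BExp V) (C : Cmd V) (φ : Assertion V L) : ℕ → Assertion V L
  | 0 => .tt
  | k + 1 => (B.toAssertion.and (wp C (loopApprox B C φ k))).or (B.toAssertion.not.and φ)

lemma wp_whileDo (B : BExp V) (C : Cmd V) (φ : Assertion V L) :
    wp (.whileDo B C) φ = .conj (loopApprox B C φ) := by
  rw [wp]
  congr 1
  funext k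
  induction k with
  | zero => rfl
  | succ k ih => rw [loopApprox, ← ih]

/-- `wp C` is semantically conjunctive (and in particular monotone). -/
theorem sat_wp_of_forall_sat {ι : Type*} (C : Cmd V) {f : ι → Assertion V L}
    {ψ : Assertion V L} (hψ : ∀ I S, (∀ i, (f i).sat I S) → ψ.sat I S) {I : L → ℤ}
    {S : DState V} (hf : ∀ i, (wp C (f i)).sat I S) : (wp C ψ).sat I S := by
  induction C generalizing f ψ I S with
  | skip =>
    simp only [wp] at hf ⊢
    exact hψ I S hf
  | assign X E =>
    simp only [wp, Assertion.sat_substP] at hf ⊢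
    exact hψ _ _ hf
  | passign X Rl =>
    simp only [wp, sat_pasPre] at hf ⊢
    exact fun p hp => hψ _ _ fun i => hf i p hp
  | seq C₁ C₂ ih₁ ih₂ =>
    simp only [wp] at hf ⊢
    exact ih₁ (fun I S => ih₂ hψ) hf
  | ifte B C₁ C₂ ih₁ ih₂ =>
    simp only [wp] at hf ⊢
    by_cases hB : (B.toAssertion : Assertion V L).sat I S
    · simp only [Assertion.sat_guard_pos hB] at hf ⊢
      exact ih₁ hψ hf
    · simp only [Assertion.sat_guard_neg hB] at hf ⊢
      exact ih₂ hψ hf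
  | whileDo B C ih =>
    have approx : ∀ k I S, (∀ i, (loopApprox B C (f i) k).sat I S) →
        (loopApprox B C ψ k).sat I S := by
      intro k
      induction k with
      | zero => exact fun _ _ _ => trivial
      | succ k ihk =>
        intro I S hfk
        simp only [loopApprox] at hfk ⊢
        by_cases hB : (B.toAssertion : Assertion V L).sat I S
        · simp only [Assertion.sat_guard_pos hB] at hfk ⊢
          exact ih ihk hfk
        · simp only [Assertion.sat_guard_neg hB] at hfk ⊢
          exact hψ I S hfk
    simp only [wp_whileDo] at hf ⊢
    exact fun k => approx k I S fun i => hf i k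

end

/-- Derivability of weakest preconditions in PHL_d: for every
command `C` and deterministic assertion `φ`, the triple `{wp(C,φ)} C {φ}` is
derivable. -/
theorem wp_derivable {V L : Type} (C : Cmd V) (φ : Assertion V L) :
    Derivable (wp C φ) C φ := by
  induction C generalizing φ with
  | skip => rw [wp]; exact .skip φ
  | assign X E => rw [wp]; exact .assign φ X E
  | passign X Rl => rw [wp]; exact .passign φ X Rl
  | seq C₁ C₂ ih₁ ih₂ => rw [wp]; exact .seq (ih₁ (wp C₂ φ)) (ih₂ φ)
  | ifte B C₁ C₂ ih₁ ih₂ =>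
    rw [wp]
    exact .ifte
      (.cons (fun _ _ h => (Assertion.sat_guard_pos h.2).mp h.1) (ih₁ φ) fun _ _ => id)
      (.cons (fun _ _ h => (Assertion.sat_guard_neg h.2).mp h.1) (ih₂ φ) fun _ _ => id)
  | whileDo B C ih =>
    rw [wp_whileDo]
    have body : Derivable ((Assertion.conj (loopApprox B C φ)).and B.toAssertion) C
        (.conj (loopApprox B C φ)) :=
      .cons (fun _ _ h => sat_wp_of_forall_sat C (fun _ _ => id)
          fun k => (Assertion.sat_guard_pos h.2).mp (h.1 (k + 1)))
        (ih _) fun _ _ => id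
    exact .cons (fun _ _ => id) (.whileDo body)
      fun _ _ h => (Assertion.sat_guard_neg h.2).mp (h.1 1)
end
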